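/- arXiv:2006.14034 — 2 statements merged into one kernel-verified Lean document; each statement's English description precedes it below -/
import Mathlib

section
/- (Sample-to-sample critic decay.) Let θ_k, θ_{k+1} ∈ ℝᵖ with ‖θ_k‖ ≤ θ̄, let φ be Lipschitz with constant L_φ on a set containing x_{k+1}^{u_k} and x̂_{k+1}^{u_k}, and suppose: (i) ‖x_{k+1}^{u_k} − x̂_{k+1}^{u_k}‖ ≤ L_f f̄ δ²; (ii) constraint (C1) at step k+1: Ĵ(x_{k+1}^{u_k}, θ_{k+1}) ≤ Ĵ(x_{k+1}^{u_k}, θ_k) + ε₁; (iii) constraint (C3) at step k: Ĵ(x̂_{k+1}^{u_k}, θ_k) − Ĵ(x_k, θ_k) ≤ −(δ/2) w(x_k) + ε₃. Then Ĵ(x_{k+1}^{u_k}, θ_{k+1}) − Ĵ(x_k, θ_k) ≤ −(δ/2) w(x_k) + θ̄ L_φ L_f f̄ δ² + ε₁ + ε₃. -/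
open Set
open RealInnerProductSpace

/-- **Sample-to-sample critic decay.**
With the critic `Ĵ(x,θ) := ⟨θ, φ(x)⟩`: if `‖θ_k‖ ≤ θ̄`, `φ` is Lipschitz with constant `L_φ`
on a set containing the exact next state `x_{k+1}^{u_k}` and the Euler prediction
`x̂_{k+1}^{u_k}`, the prediction error satisfies `‖x_{k+1}^{u_k} − x̂_{k+1}^{u_k}‖ ≤ L_f f̄ δ²`,
constraint (C1) holds at step `k+1` and constraint (C3) holds at step `k`, then
`Ĵ(x_{k+1}^{u_k}, θ_{k+1}) − Ĵ(x_k, θ_k) ≤ −(δ/2) w(x_k) + θ̄ L_φ L_f f̄ δ² + ε₁ + ε₃`. -/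
theorem sample_to_sample_critic_decay {n p : ℕ}
    (φ : EuclideanSpace ℝ (Fin n) → EuclideanSpace ℝ (Fin p))
    (w : EuclideanSpace ℝ (Fin n) → ℝ)
    (θk θk1 : EuclideanSpace ℝ (Fin p)) (θbar Lφ Lf fbar δ ε₁ ε₃ : ℝ)
    (S : Set (EuclideanSpace ℝ (Fin n)))
    (xk xnext xpred : EuclideanSpace ℝ (Fin n))
    (hθk : ‖θk‖ ≤ θbar) (hLφ : 0 ≤ Lφ) (hLf : 0 ≤ Lf) (hfbar : 0 ≤ fbar)
    (hmemx : xnext ∈ S) (hmemp : xpred ∈ S)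
    (hLip : ∀ a ∈ S, ∀ b ∈ S, ‖φ a - φ b‖ ≤ Lφ * ‖a - b‖)
    (herr : ‖xnext - xpred‖ ≤ Lf * fbar * δ ^ 2)
    (hC1 : ⟪θk1, φ xnext⟫ ≤ ⟪θk, φ xnext⟫ + ε₁)
    (hC3 : ⟪θk, φ xpred⟫ - ⟪θk, φ xk⟫ ≤ -(δ / 2) * w xk + ε₃) :
    ⟪θk1, φ xnext⟫ - ⟪θk, φ xk⟫
      ≤ -(δ / 2) * w xk + θbar * Lφ * Lf * fbar * δ ^ 2 + ε₁ + ε₃ := by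
  have h0 : (0:ℝ) ≤ ‖θk‖ := norm_nonneg _
  have hθbar : (0:ℝ) ≤ θbar := h0.trans hθk
  have key : ⟪θk, φ xnext⟫ - ⟪θk, φ xpred⟫ ≤ θbar * Lφ * Lf * fbar * δ ^ 2 := by
    have h1 : ⟪θk, φ xnext⟫ - ⟪θk, φ xpred⟫ = ⟪θk, φ xnext - φ xpred⟫ := by
      rw [inner_sub_right]
    rw [h1]
    calc ⟪θk, φ xnext - φ xpred⟫ ≤ ‖θk‖ * ‖φ xnext - φ xpred‖ :=
          real_inner_le_norm _ _
      _ ≤ θbar * (Lφ * ‖xnext - xpred‖) := by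
          apply mul_le_mul hθk (hLip _ hmemx _ hmemp) (norm_nonneg _) hθbar
      _ ≤ θbar * (Lφ * (Lf * fbar * δ ^ 2)) := by
          apply mul_le_mul_of_nonneg_left _ hθbar
          exact mul_le_mul_of_nonneg_left herr hLφ
      _ = θbar * Lφ * Lf * fbar * δ ^ 2 := by ring
  linarith
end

section
/- (Feasibility of the ideal weight for the predicted-decay constraint.) Suppose V(x) = ⟨θ#, φ(x)⟩ for all x (Assumption 2), and suppose the nominal SH exact-trajectory decay V(x_{k+1}^{μ(x_k)}) − V(x_k) ≤ −(δ/2) w(x_k) holds, where x_{k+1}^{μ(x_k)} is the exact SH state after one sampling period δ under the nominal input μ(x_k). If φ is Lipschitz with constant L_φ on a set containing the exact state and the Euler prediction x̂_{k+1}^{μ(x_k)} := x_k + δ f(x_k, μ(x_k)), and ‖x_{k+1}^{μ(x_k)} − x̂_{k+1}^{μ(x_k)}‖ ≤ L_f f̄ δ², then Ĵ(x̂_{k+1}^{μ(x_k)}, θ#) − Ĵ(x_k, θ#) ≤ −(δ/2) w(x_k) + ‖θ#‖ L_φ L_f f̄ δ². In particular, if ‖θ#‖ L_φ L_f f̄ δ²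 ≤ (w̄/10) δ and w(x_k)/2 ≥ w̄, the constraint (C3) with θ = θ#, u = μ(x_k) is satisfied for any relaxation ε₃ ≥ (w̄/10) δ. -/
open Set
open RealInnerProductSpace

/-- **Feasibility of the ideal weight for the predicted-decay constraint.**
Suppose `V(x) = ⟨θ#, φ(x)⟩` for all `x` (Assumption 2), and the nominal SH exact-trajectory
decay `V(x_{k+1}^{μ(x_k)}) − V(x_k) ≤ −(δ/2) w(x_k)` holds. If `φ` is Lipschitz with constant
`L_φ` on a set containing the exact next state `xnext = x_{k+1}^{μ(x_k)}` and the Euler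
prediction `xpred = x̂_{k+1}^{μ(x_k)}`, and `‖xnext − xpred‖ ≤ L_f f̄ δ²`, then
`Ĵ(xpred, θ#) − Ĵ(x_k, θ#) ≤ −(δ/2) w(x_k) + ‖θ#‖ L_φ L_f f̄ δ²`. In particular, if
`‖θ#‖ L_φ L_f f̄ δ² ≤ (w̄/10) δ` and `w(x_k)/2 ≥ w̄`, then constraint (C3) with `θ = θ#`,
`u = μ(x_k)` is satisfied for any relaxation `ε₃ ≥ (w̄/10) δ`. -/
theorem ideal_weight_feasibility_C3 {n p : ℕ}
    (φ : EuclideanSpace ℝ (Fin n) → EuclideanSpace ℝ (Fin p))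
    (V w : EuclideanSpace ℝ (Fin n) → ℝ)
    (θsharp : EuclideanSpace ℝ (Fin p)) (Lφ Lf fbar δ wbar : ℝ)
    (S : Set (EuclideanSpace ℝ (Fin n)))
    (xk xnext xpred : EuclideanSpace ℝ (Fin n))
    (hδ : 0 < δ) (hLφ : 0 ≤ Lφ) (hLf : 0 ≤ Lf) (hfbar : 0 ≤ fbar)
    (hAsm2 : ∀ x, V x = ⟪θsharp, φ x⟫)
    (hnom : V xnext - V xk ≤ -(δ / 2) * w xk)
    (hmemx : xnext ∈ S) (hmemp : xpred ∈ S)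
    (hLip : ∀ a ∈ S, ∀ b ∈ S, ‖φ a - φ b‖ ≤ Lφ * ‖a - b‖)
    (herr : ‖xnext - xpred‖ ≤ Lf * fbar * δ ^ 2) :
    ⟪θsharp, φ xpred⟫ - ⟪θsharp, φ xk⟫
        ≤ -(δ / 2) * w xk + ‖θsharp‖ * Lφ * Lf * fbar * δ ^ 2 ∧
      (‖θsharp‖ * Lφ * Lf * fbar * δ ^ 2 ≤ (wbar / 10) * δ → wbar ≤ w xk / 2 →
        ∀ ε₃ : ℝ, (wbar / 10) * δ ≤ ε₃ →
          ⟪θsharp, φ xpred⟫ - ⟪θsharp, φ xk⟫ ≤ -(δ / 2) * w xk + ε₃) := by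
  have key : ⟪θsharp, φ xpred⟫ - ⟪θsharp, φ xk⟫
      ≤ -(δ / 2) * w xk + ‖θsharp‖ * Lφ * Lf * fbar * δ ^ 2 := by
    have h1 : ⟪θsharp, φ xpred⟫ - ⟪θsharp, φ xnext⟫
        ≤ ‖θsharp‖ * Lφ * Lf * fbar * δ ^ 2 := by
      have := real_inner_le_norm θsharp (φ xpred - φ xnext)
      rw [inner_sub_right] at this
      have h2 := hLip xpred hmemp xnext hmemx
      have h3 : ‖xpred - xnext‖ = ‖xnext - xpred‖ := norm_sub_rev _ _
      have h4 : ‖φ xpred - φ xnext‖ ≤ Lφ * (Lf * fbar * δ ^ 2) := by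
        calc ‖φ xpred - φ xnext‖ ≤ Lφ * ‖xpred - xnext‖ := h2
          _ ≤ Lφ * (Lf * fbar * δ ^ 2) := by
              rw [h3]; exact mul_le_mul_of_nonneg_left herr hLφ
      nlinarith [norm_nonneg θsharp, mul_le_mul_of_nonneg_left h4 (norm_nonneg θsharp)]
    have h5 : ⟪θsharp, φ xnext⟫ - ⟪θsharp, φ xk⟫ ≤ -(δ / 2) * w xk := by
      rw [← hAsm2, ← hAsm2]; exact hnom
    linarith
  refine ⟨key, fun hsmall hw ε₃ hε₃ => ?_⟩
  linarith
end
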